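/- Let E be a real normed space, K ⊆ E a nontrivial cone with norm-base B_K, and A ⊆ E a nontrivial cone with norm-base B_A. Assume that cl S_{−K} is weakly compact. Then the following are equivalent: (1) cl(conv({0} ∪ (bd A ∩ {x | ‖x‖ = 1}))) ∩ cl S_{−K} = ∅, where bd A is the topological boundary of A; (2) there exists (x*, α) ∈ K^{aw#} with α > 0 such that x*(a) + α‖a‖ > 0 for all a ∈ (bd A) \ {0} and x*(k) + α‖k‖ < 0 for all k ∈ (−K) \ {0}; (3) there exists (x*, α) ∈ K^{aw#} such that x*(a) + α‖a‖ > 0 for all a ∈ (bd A) \ {0} and x*(k) + α‖k‖ < 0 for all k ∈ (−K) \ {0}. -/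

import Mathlib

open Set

variable {E : Type*} [NormedAddCommGroup E] [NormedSpace ℝ E]

/-- `K` is a cone: contains `0` and is closed under nonnegative scalar multiplication. -/
def IsCone (K : Set E) : Prop :=
  (0 : E) ∈ K ∧ ∀ t : ℝ, 0 ≤ t → ∀ x ∈ K, t • x ∈ K

/-- A cone is nontrivial if it is neither `{0}` nor the whole space. -/
def IsNontrivialCone (K : Set E) : Prop :=
  IsCone K ∧ K ≠ {0} ∧ K ≠ Set.univ

/-- The norm-base of a cone: its intersection with the unit sphere. -/
def normBase (K : Set E) : Set E := {x ∈ K | ‖x‖ = 1}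

/-- Closure of a set with respect to the weak topology `σ(E, E*)`. -/
noncomputable def wClosure (S : Set E) : Set E :=
  (toWeakSpace ℝ E).symm '' closure ((toWeakSpace ℝ E) '' S)

/-- A set is weakly compact if it is compact in the weak topology `σ(E, E*)`. -/
def WeaklyCompact (S : Set E) : Prop :=
  IsCompact ((toWeakSpace ℝ E) '' S)

/-- A set is weakly closed if it equals its weak closure. -/
noncomputable def WeaklyClosed (S : Set E) : Prop :=
  wClosure S = S

/-- The (topological) dual cone `K⁺`. -/
def dualCone (K : Set E) : Set (E →L[ℝ] ℝ) :=
  {f | ∀ k ∈ K, 0 ≤ f k}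

/-- The set `K^#` of functionals strictly positive on `K \ {0}`. -/
def sharpCone (K : Set E) : Set (E →L[ℝ] ℝ) :=
  {f | ∀ k ∈ K, k ≠ 0 → 0 < f k}

/-- The set `K^{w#}` of functionals strictly positive on the weak closure of the norm-base. -/
noncomputable def wSharpCone (K : Set E) : Set (E →L[ℝ] ℝ) :=
  {f | ∀ x ∈ wClosure (normBase K), 0 < f x}

/-- The algebraic interior (core) of a set in a real vector space. -/
def core {X : Type*} [AddCommGroup X] [Module ℝ X] (Ω : Set X) : Set X :=
  {x ∈ Ω | ∀ v : X, ∃ ε > 0, ∀ t ∈ Set.Icc (0 : ℝ) ε, x + t • v ∈ Ω}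

/-- The augmented dual cone `K^{a+}`. -/
def augDualCone (K : Set E) : Set ((E →L[ℝ] ℝ) × ℝ) :=
  {p | 0 ≤ p.2 ∧ ∀ y ∈ K, 0 ≤ p.1 y - p.2 * ‖y‖}

/-- The set `K^{a#}`. -/
def augSharpCone (K : Set E) : Set ((E →L[ℝ] ℝ) × ℝ) :=
  {p | 0 ≤ p.2 ∧ p.1 ∈ sharpCone K ∧ ∀ y ∈ K, y ≠ 0 → 0 < p.1 y - p.2 * ‖y‖}

/-- The set `K^{aw#}`. -/
noncomputable def augWSharpCone (K : Set E) : Set ((E →L[ℝ] ℝ) × ℝ) :=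
  {p | 0 ≤ p.2 ∧ p.1 ∈ sharpCone K ∧ ∀ y ∈ wClosure (normBase K), p.2 < p.1 y}

/-- `S_C = conv(B_C)`. -/
noncomputable def convBase (C : Set E) : Set E := convexHull ℝ (normBase C)

/-- `S_C^0 = conv({0} ∪ B_C)`. -/
noncomputable def convBase0 (C : Set E) : Set E := convexHull ℝ ({0} ∪ normBase C)

/-!
(1) ⇒ (2): the norm-closed convex set `cl conv({0} ∪ (bd A ∩ S))` is weakly closed (Mazur), so
Hahn–Banach in the weak topology strictly separates it from the weakly compact convex set
`cl S_{-K}`: `g < u` on the first, `v < g` on the second, `u < v`. Then `(-g, u)` works, since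
`0` lies in the first set (so `u > 0`), and all conditions are positively homogeneous, so they only
need checking on the unit sphere, where `bd A` and `-K` meet the two separated sets.

(3) ⇒ (1): `f ≥ -α` on the first set. On the weak closure of `B_{-K}` we have `f < -α`; this
set is weakly compact, so `f` attains there a maximum `m < -α`, and `f ≤ m` then passes to the
closed convex hull `cl S_{-K}`.
-/

open Set

theorem IsCone.neg {K : Set E} (hK : IsCone K) : IsCone (-K) :=
  ⟨by simpa using hK.1, fun t ht x hx => by simpa [smul_neg] using hK.2 t ht (-x) hx⟩

open Pointwise in
theorem IsCone.smul_set_eq {K : Set E} (hK : IsCone K) {t : ℝ} (ht : 0 < t) : t • K = K := by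
  refine (smul_set_subset_iff.2 fun x hx => hK.2 t ht.le x hx).antisymm fun x hx => ?_
  exact ⟨t⁻¹ • x, hK.2 _ (inv_nonneg.2 ht.le) x hx, smul_inv_smul₀ ht.ne' x⟩

open Pointwise in
theorem IsCone.smul_mem_frontier {K : Set E} (hK : IsCone K) {t : ℝ} (ht : 0 < t) {x : E}
    (hx : x ∈ frontier K) : t • x ∈ frontier K := by
  have h := (Homeomorph.smulOfNeZero t ht.ne').image_frontier K
  change (t • ·) '' frontier K = frontier ((t • ·) '' K) at h
  rw [image_smul, image_smul, hK.smul_set_eq ht] at h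
  exact h ▸ smul_mem_smul_set hx

omit [NormedSpace ℝ E] in
theorem normBase_neg (K : Set E) : normBase (-K) = -normBase K := by
  ext x
  simp [normBase]

theorem IsCone.inv_norm_smul_mem_normBase {K : Set E} (hK : IsCone K) {x : E} (hx : x ∈ K)
    (hx0 : x ≠ 0) : ‖x‖⁻¹ • x ∈ normBase K :=
  ⟨hK.2 _ (inv_nonneg.2 (norm_nonneg x)) x hx, norm_smul_inv_norm hx0⟩

theorem ContinuousLinearMap.closure_convexHull_subset_le (f : E →L[ℝ] ℝ) {S : Set E} {c : ℝ}
    (h : S ⊆ {x | f x ≤ c}) : closure (convexHull ℝ S) ⊆ {x | f x ≤ c} :=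
  closure_minimal (convexHull_min h (convex_halfSpace_le f.toLinearMap.isLinear c))
    (isClosed_le f.continuous continuous_const)

theorem ContinuousLinearMap.closure_convexHull_subset_ge (f : E →L[ℝ] ℝ) {S : Set E} {c : ℝ}
    (h : S ⊆ {x | c ≤ f x}) : closure (convexHull ℝ S) ⊆ {x | c ≤ f x} :=
  closure_minimal (convexHull_min h (convex_halfSpace_ge f.toLinearMap.isLinear c))
    (isClosed_le continuous_const f.continuous)

theorem toWeakSpace_image_wClosure (S : Set E) :
    toWeakSpace ℝ E '' wClosure S = closure (toWeakSpace ℝ E '' S) :=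
  (toWeakSpace ℝ E).image_symm_image _

theorem mem_wClosure_iff {S : Set E} {y : E} :
    y ∈ wClosure S ↔ toWeakSpace ℝ E y ∈ closure (toWeakSpace ℝ E '' S) := by
  rw [← toWeakSpace_image_wClosure, (toWeakSpace ℝ E).injective.mem_set_image]

theorem wClosure_neg (S : Set E) : wClosure (-S) = -wClosure S := by
  ext y
  rw [mem_neg, mem_wClosure_iff, mem_wClosure_iff, map_neg, ← image_neg_eq_neg, image_image]
  simp_rw [map_neg]
  rw [← image_image (fun z => -z), image_neg_eq_neg, ← neg_closure, mem_neg]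

theorem wClosure_subset_closure_convexHull (S : Set E) :
    wClosure S ⊆ closure (convexHull ℝ S) := by
  intro y hy
  rw [mem_wClosure_iff] at hy
  rw [← (toWeakSpace ℝ E).injective.mem_set_image,
    (convex_convexHull ℝ S).toWeakSpace_closure ℝ]
  exact closure_mono (image_mono (subset_convexHull ℝ S)) hy

theorem WeaklyCompact.apply_lt_of_forall_wClosure_lt {S : Set E}
    (hS : WeaklyCompact (closure (convexHull ℝ S))) (f : E →L[ℝ] ℝ) {c : ℝ}
    (hf : ∀ y ∈ wClosure S, f y < c) : ∀ x ∈ closure (convexHull ℝ S), f x < c := by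
  rcases S.eq_empty_or_nonempty with rfl | hne
  · simp
  have hcpt : IsCompact (closure (toWeakSpace ℝ E '' S)) :=
    hS.of_isClosed_subset isClosed_closure
      (toWeakSpace_image_wClosure S ▸ image_mono (wClosure_subset_closure_convexHull S))
  obtain ⟨w, hw, hmax⟩ := hcpt.exists_isMaxOn (hne.image _).closure
    (WeakBilin.eval_continuous (topDualPairing ℝ E).flip f).continuousOn
  have hS : S ⊆ {x | f x ≤ f ((toWeakSpace ℝ E).symm w)} := fun x hx =>
    hmax (subset_closure (mem_image_of_mem _ hx))
  exact fun x hx => (f.closure_convexHull_subset_le hS hx).trans_lt (hf _ ⟨w, hw, rfl⟩)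

theorem exists_separation_of_weaklyCompact {s t : Set E} (hs : Convex ℝ s) (hsc : IsClosed s)
    (ht : Convex ℝ t) (htc : WeaklyCompact t) (hst : Disjoint s t) :
    ∃ (f : E →L[ℝ] ℝ) (u v : ℝ),
      (∀ a ∈ s, f a < u) ∧ u < v ∧ ∀ b ∈ t, v < f b := by
  have : LocallyConvexSpace ℝ (WeakSpace ℝ E) := WeakBilin.locallyConvexSpace
  have hsc' : IsClosed (toWeakSpace ℝ E '' s) := by
    rw [← hsc.closure_eq, hs.toWeakSpace_closure ℝ]
    exact isClosed_closure
  obtain ⟨g, u, v, hgs, huv, hgt⟩ := geometric_hahn_banach_closed_compact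
    (hs.linear_image (toWeakSpace ℝ E).toLinearMap) hsc'
    (ht.linear_image (toWeakSpace ℝ E).toLinearMap) htc
    ((disjoint_image_iff (toWeakSpace ℝ E).injective).2 hst)
  exact ⟨g.comp (toWeakSpaceCLM ℝ E), u, v, fun a ha => hgs _ (mem_image_of_mem _ ha), huv,
    fun b hb => hgt _ (mem_image_of_mem _ hb)⟩

theorem exists_augWSharpCone_separating {K A : Set E} (hK : IsCone K) (hA : IsCone A)
    (hcomp : WeaklyCompact (closure (convBase (-K))))
    (h : closure (convexHull ℝ ({0} ∪ (frontier A ∩ {x : E | ‖x‖ = 1}))) ∩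
      closure (convBase (-K)) = ∅) :
    ∃ f : E →L[ℝ] ℝ, ∃ α : ℝ, (f, α) ∈ augWSharpCone K ∧ 0 < α ∧
      (∀ a ∈ frontier A, a ≠ 0 → 0 < f a + α * ‖a‖) ∧
      (∀ k ∈ (-K : Set E), k ≠ 0 → f k + α * ‖k‖ < 0) := by
  obtain ⟨g, u, v, hgu, huv, hgv⟩ := exists_separation_of_weaklyCompact
    (convex_convexHull ℝ _).closure isClosed_closure (convex_convexHull ℝ _).closure hcomp
    (disjoint_iff_inter_eq_empty.2 h)
  have hu : 0 < u := by simpa using hgu 0 (subset_closure (subset_convexHull ℝ _ (Or.inl rfl)))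
  have hgA : ∀ a ∈ frontier A, a ≠ 0 → g a < ‖a‖ * u := fun a ha ha0 => by
    have hpos := norm_pos_iff.2 ha0
    have hmem : ‖a‖⁻¹ • a ∈ frontier A ∩ {x | ‖x‖ = 1} :=
      ⟨hA.smul_mem_frontier (inv_pos.2 hpos) ha, norm_smul_inv_norm ha0⟩
    have := hgu _ (subset_closure (subset_convexHull ℝ _ (Or.inr hmem)))
    rwa [map_smul, smul_eq_mul, inv_mul_lt_iff₀ hpos] at this
  have hgK : ∀ k ∈ -K, k ≠ 0 → ‖k‖ * v < g k := fun k hk hk0 => by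
    have := hgv _ (subset_closure
      (subset_convexHull ℝ _ (hK.neg.inv_norm_smul_mem_normBase hk hk0)))
    rwa [map_smul, smul_eq_mul, lt_inv_mul_iff₀ (norm_pos_iff.2 hk0)] at this
  have hgB : normBase K ⊆ {x | v ≤ (-g) x} := fun b hb => by
    have := hgv (-b) (subset_closure
      (subset_convexHull ℝ _ (normBase_neg K ▸ neg_mem_neg.2 hb)))
    simpa using this.le
  refine ⟨-g, u, ⟨hu.le, fun k hk hk0 => ?_, fun y hy => ?_⟩, hu, fun a ha ha0 => ?_,
    fun k hk hk0 => ?_⟩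
  · have := hgK (-k) (neg_mem_neg.2 hk) (neg_ne_zero.2 hk0)
    simp only [norm_neg, map_neg, neg_apply] at this ⊢
    nlinarith [norm_pos_iff.2 hk0]
  · exact huv.trans_le
      ((-g).closure_convexHull_subset_ge hgB (wClosure_subset_closure_convexHull _ hy))
  · simp only [neg_apply]
    linarith [hgA a ha ha0]
  · simp only [neg_apply]
    nlinarith [hgK k hk hk0, norm_pos_iff.2 hk0]

theorem closure_convexHull_frontier_inter_eq_empty {K A : Set E} {f : E →L[ℝ] ℝ} {α : ℝ}
    (hcomp : WeaklyCompact (closure (convBase (-K)))) (hα : 0 ≤ α)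
    (hfK : ∀ y ∈ wClosure (normBase K), α < f y)
    (hfA : ∀ a ∈ frontier A, a ≠ 0 → 0 < f a + α * ‖a‖) :
    closure (convexHull ℝ ({0} ∪ (frontier A ∩ {x : E | ‖x‖ = 1}))) ∩
      closure (convBase (-K)) = ∅ := by
  have hK : ∀ x ∈ closure (convBase (-K)), f x < -α :=
    hcomp.apply_lt_of_forall_wClosure_lt f fun y hy => by
      rw [normBase_neg, wClosure_neg] at hy
      simpa using neg_lt_neg (hfK _ hy)
  have hA : closure (convexHull ℝ ({0} ∪ (frontier A ∩ {x : E | ‖x‖ = 1}))) ⊆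
      {x | -α ≤ f x} :=
    f.closure_convexHull_subset_ge <| by
      rintro z (rfl | ⟨hz, hz1 : ‖z‖ = 1⟩)
      · simpa using hα
      · have := hfA z hz (norm_ne_zero_iff.1 (hz1 ▸ one_ne_zero))
        rw [hz1, mul_one] at this
        exact neg_le_iff_add_nonneg.2 this.le
  exact eq_empty_iff_forall_notMem.2 fun x hx => (hK x hx.2).not_ge (hA hx.1)

theorem stmt19 (K A : Set E) (hK : IsNontrivialCone K) (hA : IsNontrivialCone A)
    (hcomp : WeaklyCompact (closure (convBase (-K)))) :
    List.TFAE [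
      closure (convexHull ℝ ({0} ∪ (frontier A ∩ {x : E | ‖x‖ = 1}))) ∩
        closure (convBase (-K)) = ∅,
      (∃ f : E →L[ℝ] ℝ, ∃ α : ℝ, (f, α) ∈ augWSharpCone K ∧ 0 < α ∧
        (∀ a ∈ frontier A, a ≠ 0 → 0 < f a + α * ‖a‖) ∧
        (∀ k ∈ (-K : Set E), k ≠ 0 → f k + α * ‖k‖ < 0)),
      (∃ f : E →L[ℝ] ℝ, ∃ α : ℝ, (f, α) ∈ augWSharpCone K ∧
        (∀ a ∈ frontier A, a ≠ 0 → 0 < f a + α * ‖a‖) ∧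
        (∀ k ∈ (-K : Set E), k ≠ 0 → f k + α * ‖k‖ < 0))] := by
  tfae_have 1 → 2 := exists_augWSharpCone_separating hK.1 hA.1 hcomp
  tfae_have 2 → 3 := fun ⟨f, α, hfα, _, hfA, hfK⟩ => ⟨f, α, hfα, hfA, hfK⟩
  tfae_have 3 → 1 := fun ⟨_, _, ⟨hα, _, hfK⟩, hfA, _⟩ =>
    closure_convexHull_frontier_inter_eq_empty hcomp hα hfK hfA
  tfae_finish
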